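/- arXiv:1807.04022 — 3 statements merged into one kernel-verified Lean document; each statement's English description precedes it below -/
import Mathlib

section
/- For each n ∈ ℕ, n ≥ 1, define f_n : (0,1) → [0,1] piecewise by: for k ∈ ℕ odd and x ∈ ((k−1)/(n+k−1), k/(n+k)), f_n(x) = (x(n+k−1) − k + 1)·(n+k)/n, and for k ∈ ℕ even and x ∈ [(k−1)/(n+k−1), k/(n+k)), f_n(x) = (k − x(n+k))·(n+k−1)/n. Then for every n, the pushforward of Lebesgue measure on (0,1) under f_n equals Lebesgue measure on [0,1]; i.e. for every Borel set A ⊆ [0,1], Leb{x ∈ (0,1) : f_n(x) ∈ A} = Leb(A). -/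
/-!
With `b k = k / (n + k)` we have `0 = b 0 < b 1 < ⋯ → 1`, and on `(b k, b (k + 1))` the function
`fₙ` is the affine bijection onto `(0, 1)`, increasing for `k` even and decreasing for `k` odd
(this piece is the one the hypotheses index by `k + 1`). Hence the pushforward of Lebesgue measure
on `(b k, b (k + 1))` is `(b (k + 1) - b k)` times Lebesgue measure on `(0, 1)`, and these lengths
telescope to `1`.
-/

open MeasureTheory Filter Topology Set

theorem Real.map_volume_sub_div (a : ℝ) {r : ℝ} (hr : r ≠ 0) :
    Measure.map (fun x => (x - a) / r) volume = ENNReal.ofReal |r| • volume := by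
  have hcomp : (fun x : ℝ => (x - a) / r) = (· * r⁻¹) ∘ (· - a) := by
    ext x; simp [div_eq_mul_inv]
  rw [hcomp, ← Measure.map_map (measurable_mul_const _) (measurable_sub_const _),
    map_sub_right_eq_self, Real.map_volume_mul_right (inv_ne_zero hr), inv_inv]

theorem map_volume_restrict_preimage_sub_div (a : ℝ) {r : ℝ} (hr : r ≠ 0) {t : Set ℝ}
    (ht : MeasurableSet t) :
    (volume.restrict ((fun x => (x - a) / r) ⁻¹' t)).map (fun x => (x - a) / r) =
      ENNReal.ofReal |r| • volume.restrict t := by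
  rw [← Measure.restrict_map (by fun_prop) ht, Real.map_volume_sub_div a hr,
    Measure.restrict_smul]

theorem map_volume_restrict_Ioo_of_eqOn_sub_div {f : ℝ → ℝ} {p q : ℝ} (hpq : p < q)
    (hf : EqOn f (fun x => (x - p) / (q - p)) (Ioo p q)) :
    (volume.restrict (Ioo p q)).map f = ENNReal.ofReal (q - p) • volume.restrict (Ioo 0 1) := by
  have hqp : 0 < q - p := sub_pos.2 hpq
  have hpre : (fun x => (x - p) / (q - p)) ⁻¹' Ioo 0 1 = Ioo p q := by
    ext x
    simp only [mem_preimage, mem_Ioo, div_pos_iff_of_pos_right hqp, div_lt_one hqp]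
    constructor <;> rintro ⟨h₁, h₂⟩ <;> constructor <;> linarith
  rw [Measure.map_congr (hf.aeEq_restrict measurableSet_Ioo), ← hpre,
    map_volume_restrict_preimage_sub_div p hqp.ne' measurableSet_Ioo, abs_of_pos hqp]

theorem map_volume_restrict_Ioo_of_eqOn_sub_div' {f : ℝ → ℝ} {p q : ℝ} (hpq : p < q)
    (hf : EqOn f (fun x => (q - x) / (q - p)) (Ioo p q)) :
    (volume.restrict (Ioo p q)).map f = ENNReal.ofReal (q - p) • volume.restrict (Ioo 0 1) := by
  have hqp : 0 < q - p := sub_pos.2 hpq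
  have hflip : (fun x => (q - x) / (q - p)) = fun x => (x - q) / (p - q) := by
    ext x; rw [← neg_div_neg_eq, neg_sub, neg_sub]
  have hpre : (fun x => (q - x) / (q - p)) ⁻¹' Ioo 0 1 = Ioo p q := by
    ext x
    simp only [mem_preimage, mem_Ioo, div_pos_iff_of_pos_right hqp, div_lt_one hqp]
    constructor <;> rintro ⟨h₁, h₂⟩ <;> constructor <;> linarith
  rw [Measure.map_congr (hf.aeEq_restrict measurableSet_Ioo), ← hpre, hflip,
    map_volume_restrict_preimage_sub_div q (sub_neg.2 hpq).ne measurableSet_Ioo,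
    abs_of_neg (sub_neg.2 hpq), neg_sub]

section Partition

variable {α : Type*} [LinearOrder α] [TopologicalSpace α] [OrderTopology α]
  {b : ℕ → α} {c : α}

theorem Monotone.iUnion_Ico_succ_eq_of_tendsto (hb : Monotone b) (hlim : Tendsto b atTop (𝓝 c)) :
    ⋃ k, Ico (b k) (b (k + 1)) = Ico (b 0) c := by
  apply Subset.antisymm
  · refine iUnion_subset fun k x hx => ⟨(hb k.zero_le).trans hx.1, hx.2.trans_le ?_⟩
    exact hb.ge_of_tendsto hlim (k + 1)
  · rintro x ⟨h₀, hc⟩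
    obtain ⟨N, hN⟩ := (hlim.eventually (eventually_gt_nhds hc)).exists
    obtain ⟨k, -, hk⟩ := mem_iUnion₂.1 (Ico_subset_biUnion_Ico N b ⟨h₀, hN⟩)
    exact mem_iUnion.2 ⟨k, hk⟩

theorem Monotone.restrict_Ioo_eq_sum_of_tendsto [MeasurableSpace α] [OpensMeasurableSpace α]
    (μ : Measure α) [NullSingletonClass μ] (hb : Monotone b) (hlim : Tendsto b atTop (𝓝 c)) :
    μ.restrict (Ioo (b 0) c) = Measure.sum fun k => μ.restrict (Ioo (b k) (b (k + 1))) := by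
  simp_rw [Measure.restrict_congr_set Ioo_ae_eq_Ico, ← hb.iUnion_Ico_succ_eq_of_tendsto hlim]
  exact Measure.restrict_iUnion hb.pairwise_disjoint_on_Ico_succ fun _ => measurableSet_Ico

end Partition

theorem Monotone.tsum_ofReal_sub_eq_of_tendsto {b : ℕ → ℝ} {c : ℝ} (hb : Monotone b)
    (hlim : Tendsto b atTop (𝓝 c)) :
    ∑' k, ENNReal.ofReal (b (k + 1) - b k) = ENNReal.ofReal (c - b 0) := by
  have := congrArg (· univ) (hb.restrict_Ioo_eq_sum_of_tendsto volume hlim)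
  simpa [Measure.restrict_apply_univ, Real.volume_Ioo] using this.symm

theorem Monotone.map_restrict_Ioo_of_tendsto {β : Type*} [MeasurableSpace β]
    {b : ℕ → ℝ} {c : ℝ} (hb : Monotone b) (hlim : Tendsto b atTop (𝓝 c))
    {f : ℝ → β} (hf : Measurable f) {ν : Measure β}
    (hpiece : ∀ k, (volume.restrict (Ioo (b k) (b (k + 1)))).map f =
      ENNReal.ofReal (b (k + 1) - b k) • ν) :
    (volume.restrict (Ioo (b 0) c)).map f = ENNReal.ofReal (c - b 0) • ν := by
  rw [hb.restrict_Ioo_eq_sum_of_tendsto volume hlim, Measure.map_sum hf.aemeasurable]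
  ext s hs
  simp_rw [Measure.sum_apply _ hs, hpiece, Measure.smul_apply, smul_eq_mul,
    ENNReal.tsum_mul_right, hb.tsum_ofReal_sub_eq_of_tendsto hlim]

noncomputable def breakpoint (n k : ℕ) : ℝ := k / (n + k)

namespace breakpoint

variable {n : ℕ}

theorem zero (n : ℕ) : breakpoint n 0 = 0 := by simp [breakpoint]

theorem succ_sub (hn : 0 < n) (k : ℕ) :
    breakpoint n (k + 1) - breakpoint n k = n / ((n + k) * (n + k + 1)) := by
  have : (0 : ℝ) < n := Nat.cast_pos.2 hn
  unfold breakpoint; push_cast; field_simp; ring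

theorem lt_succ (hn : 0 < n) (k : ℕ) : breakpoint n k < breakpoint n (k + 1) := by
  rw [← sub_pos, succ_sub hn]; have : (0 : ℝ) < n := Nat.cast_pos.2 hn; positivity

theorem strictMono (hn : 0 < n) : StrictMono (breakpoint n) :=
  strictMono_nat_of_lt_succ (lt_succ hn)

theorem tendsto_one (n : ℕ) : Tendsto (breakpoint n) atTop (𝓝 1) :=
  (tendsto_natCast_div_add_atTop (n : ℝ)).congr fun k => by rw [breakpoint, add_comm]

theorem sub_div_succ_sub (hn : 0 < n) (k : ℕ) (x : ℝ) :
    (x - breakpoint n k) / (breakpoint n (k + 1) - breakpoint n k) =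
      (x * (n + k) - k) * (n + k + 1) / n := by
  have : (0 : ℝ) < n := Nat.cast_pos.2 hn
  rw [succ_sub hn]; unfold breakpoint; field_simp

theorem succ_sub_div_succ_sub (hn : 0 < n) (k : ℕ) (x : ℝ) :
    (breakpoint n (k + 1) - x) / (breakpoint n (k + 1) - breakpoint n k) =
      (k + 1 - x * (n + k + 1)) * (n + k) / n := by
  have : (0 : ℝ) < n := Nat.cast_pos.2 hn
  rw [succ_sub hn]; unfold breakpoint; push_cast; field_simp; ring

end breakpoint

theorem youngMeasure_roubicek_example_general (n : ℕ) (hn : 1 ≤ n) (f : ℝ → ℝ) (hf : Measurable f)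
    (hodd : ∀ k : ℕ, 1 ≤ k → Odd k → ∀ x : ℝ,
      x ∈ Set.Ioo (((k:ℝ) - 1) / ((n:ℝ) + k - 1)) ((k:ℝ) / ((n:ℝ) + k)) →
      f x = (x * ((n:ℝ) + k - 1) - k + 1) * ((n:ℝ) + k) / n)
    (heven : ∀ k : ℕ, 1 ≤ k → Even k → ∀ x : ℝ,
      x ∈ Set.Ico (((k:ℝ) - 1) / ((n:ℝ) + k - 1)) ((k:ℝ) / ((n:ℝ) + k)) →
      f x = ((k:ℝ) - x * ((n:ℝ) + k)) * ((n:ℝ) + k - 1) / n)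
    (A : Set ℝ) (hA' : A ⊆ Set.Icc (0:ℝ) 1) :
    Measure.map f (volume.restrict (Set.Ioo (0:ℝ) 1)) A = volume A := by
  have hpiece (k : ℕ) : (volume.restrict (Ioo (breakpoint n k) (breakpoint n (k + 1)))).map f =
      ENNReal.ofReal (breakpoint n (k + 1) - breakpoint n k) • volume.restrict (Ioo 0 1) := by
    have hI : Ioo (breakpoint n k) (breakpoint n (k + 1)) =
        Ioo ((((k + 1 : ℕ) : ℝ) - 1) / (n + ((k + 1 : ℕ) : ℝ) - 1))
          (((k + 1 : ℕ) : ℝ) / (n + ((k + 1 : ℕ) : ℝ))) := by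
      simp only [breakpoint]; push_cast; ring_nf
    rcases Nat.even_or_odd k with hk | hk
    · refine map_volume_restrict_Ioo_of_eqOn_sub_div (breakpoint.lt_succ hn k) fun x hx => ?_
      rw [hodd (k + 1) k.succ_pos hk.add_one x (hI ▸ hx)]
      dsimp only
      rw [breakpoint.sub_div_succ_sub hn]; push_cast; ring
    · refine map_volume_restrict_Ioo_of_eqOn_sub_div' (breakpoint.lt_succ hn k) fun x hx => ?_
      rw [heven (k + 1) k.succ_pos hk.add_one x (Ioo_subset_Ico_self (hI ▸ hx))]
      dsimp only
      rw [breakpoint.succ_sub_div_succ_sub hn]; push_cast; ring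
  have hmap : (volume.restrict (Ioo 0 1)).map f = volume.restrict (Ioo (0 : ℝ) 1) := by
    simpa [breakpoint.zero] using
      (breakpoint.strictMono hn).monotone.map_restrict_Ioo_of_tendsto
        (breakpoint.tendsto_one n) hf hpiece
  rw [hmap, Measure.restrict_congr_set Ioo_ae_eq_Icc, Measure.restrict_apply' measurableSet_Icc,
    inter_eq_left.2 hA']

/-- For the sequence of nonperiodic m-oscillating functions `fₙ` given piecewise by
`fₙ(x) = (x(n+k-1) - k + 1)·(n+k)/n` on `((k-1)/(n+k-1), k/(n+k))` for `k` odd and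
`fₙ(x) = (k - x(n+k))·(n+k-1)/n` on `[(k-1)/(n+k-1), k/(n+k))` for `k` even, the Young
measure associated with each `fₙ` (the pushforward of Lebesgue measure on `(0,1)` under
`fₙ`) is the Lebesgue (uniform) measure on `[0,1]`: for every Borel set `A ⊆ [0,1]`,
`Leb{x ∈ (0,1) : fₙ(x) ∈ A} = Leb(A)`. -/
theorem youngMeasure_roubicek_example (n : ℕ) (hn : 1 ≤ n) (f : ℝ → ℝ) (hf : Measurable f)
    (hodd : ∀ k : ℕ, 1 ≤ k → Odd k → ∀ x : ℝ,
      x ∈ Set.Ioo (((k:ℝ) - 1) / ((n:ℝ) + k - 1)) ((k:ℝ) / ((n:ℝ) + k)) →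
      f x = (x * ((n:ℝ) + k - 1) - k + 1) * ((n:ℝ) + k) / n)
    (heven : ∀ k : ℕ, 1 ≤ k → Even k → ∀ x : ℝ,
      x ∈ Set.Ico (((k:ℝ) - 1) / ((n:ℝ) + k - 1)) ((k:ℝ) / ((n:ℝ) + k)) →
      f x = ((k:ℝ) - x * ((n:ℝ) + k)) * ((n:ℝ) + k - 1) / n)
    (A : Set ℝ) (hA : MeasurableSet A) (hA' : A ⊆ Set.Icc (0:ℝ) 1) :
    Measure.map f (volume.restrict (Set.Ioo (0:ℝ) 1)) A = volume A :=
  youngMeasure_roubicek_example_general n hn f hf hodd heven A hA'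
end

section
/- (Dieudonné) Let X be a compact metric space and ρ a finite (regular) Borel measure on X. A sequence (u_n) in L¹(X, ρ) converges weakly in L¹ to some u ∈ L¹(X, ρ) — i.e. ∫_X u_n·g dρ → ∫_X u·g dρ for every g ∈ L^∞(X, ρ) — if and only if for every Borel set A ⊆ X the limit lim_{n→∞} ∫_A u_n dρ exists and is finite. -/
open MeasureTheory Filter Topology Set
open scoped ENNReal NNReal

set_option linter.unusedSectionVars false
set_option linter.unusedVariables false
set_option maxHeartbeats 2000000
set_option synthInstance.maxHeartbeats 1000000

section DieudonneAux

variable {X : Type*} [MetricSpace X] [CompactSpace X] [MeasurableSpace X] [BorelSpace X]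

lemma dd_absCont (ρ : Measure X) [IsFiniteMeasure ρ] {f : X → ℝ} (hf : Integrable f ρ)
    {ε : ℝ} (hε : 0 < ε) :
    ∃ δ > 0, ∀ s : Set X, MeasurableSet s → ρ s ≤ ENNReal.ofReal δ →
      ∫ x in s, |f x| ∂ρ ≤ ε := by
  obtain ⟨δ, hδ, h⟩ := (memLp_one_iff_integrable.2 hf).eLpNorm_indicator_le le_rfl
    ENNReal.one_ne_top hε
  refine ⟨δ, hδ, fun s hs hρs => ?_⟩
  have h1 : ENNReal.ofReal (∫ x, ‖s.indicator f x‖ ∂ρ) = ∫⁻ x, ‖s.indicator f x‖₊ ∂ρ :=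
    ofReal_integral_norm_eq_lintegral_enorm (hf.indicator hs)
  have h2 : eLpNorm (s.indicator f) 1 ρ = ∫⁻ x, ‖s.indicator f x‖₊ ∂ρ :=
    eLpNorm_one_eq_lintegral_enorm
  have h3 : ∫ x, ‖s.indicator f x‖ ∂ρ = ∫ x in s, |f x| ∂ρ := by
    simp_rw [norm_indicator_eq_indicator_norm]
    rw [integral_indicator hs]
    simp [Real.norm_eq_abs]
  have h4 : ENNReal.ofReal (∫ x in s, |f x| ∂ρ) ≤ ENNReal.ofReal ε := by
    rw [← h3, h1, ← h2]; exact h s hs hρs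
  have h5 : 0 ≤ ∫ x in s, |f x| ∂ρ := integral_nonneg fun x => abs_nonneg _
  rwa [ENNReal.ofReal_le_ofReal_iff hε.le] at h4

lemma dd_eLpNorm_ind_sub (ρ : Measure X) {A B : Set X} (hA : MeasurableSet A)
    (hB : MeasurableSet B) :
    eLpNorm (A.indicator (1 : X → ℝ) - B.indicator 1) 1 ρ = ρ (symmDiff A B) := by
  rw [eLpNorm_one_eq_lintegral_enorm]
  simp only [enorm_eq_nnnorm]
  set F : X → ℝ := A.indicator 1 - B.indicator 1 with hF
  have : (fun x => (‖F x‖₊ : ℝ≥0∞)) = (symmDiff A B).indicator (fun _ => 1) := by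
    ext x
    by_cases hxA : x ∈ A <;> by_cases hxB : x ∈ B <;>
      simp [hF, Set.indicator_apply, hxA, hxB, Set.mem_symmDiff]
  rw [this, lintegral_indicator (hA.symmDiff hB)]
  simp

lemma dd_dist (ρ : Measure X) {f g : Lp ℝ 1 ρ} {A B : Set X} (hA : MeasurableSet A)
    (hB : MeasurableSet B) (hf : ⇑f =ᵐ[ρ] A.indicator 1) (hg : ⇑g =ᵐ[ρ] B.indicator 1) :
    dist f g = (ρ (symmDiff A B)).toReal := by
  rw [Lp.dist_def]
  rw [show eLpNorm (⇑f - ⇑g) 1 ρ = _ from eLpNorm_congr_ae (hf.sub hg)]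
  exact congrArg ENNReal.toReal (dd_eLpNorm_ind_sub ρ hA hB)

lemma dd_S_closed (ρ : Measure X) [IsFiniteMeasure ρ] :
    IsClosed {f : Lp ℝ 1 ρ | ∃ A : Set X, MeasurableSet A ∧ ⇑f =ᵐ[ρ] A.indicator 1} := by
  refine isClosed_of_closure_subset fun f hf => ?_
  obtain ⟨y, hy, hylim⟩ := mem_closure_iff_seq_limit.1 hf
  haveI : Fact ((1:ℝ≥0∞) ≤ 1) := ⟨le_rfl⟩
  obtain ⟨ns, -, hae⟩ := (tendstoInMeasure_of_tendsto_Lp hylim).exists_seq_tendsto_ae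
  choose A hAmeas hAae using hy
  have h01 : ∀ᵐ x ∂ρ, ⇑f x = 0 ∨ ⇑f x = 1 := by
    have h2 : ∀ᵐ x ∂ρ, ∀ k, ⇑(y (ns k)) x = (A (ns k)).indicator 1 x :=
      ae_all_iff.2 fun k => hAae (ns k)
    filter_upwards [hae, h2] with x hx1 hx2
    have hmem : ∀ k, ⇑(y (ns k)) x ∈ ({0, 1} : Set ℝ) := by
      intro k
      rw [hx2 k]
      by_cases h : x ∈ A (ns k) <;> simp [Set.indicator_apply, h]
    have hcl : IsClosed ({0, 1} : Set ℝ) :=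
      (isClosed_singleton.union isClosed_singleton)
    have := hcl.mem_of_tendsto hx1 (Eventually.of_forall hmem)
    simpa using this
  have hmf : Measurable ⇑f := (f : X →ₘ[ρ] ℝ).measurable
  refine ⟨{x | ⇑f x = 1}, hmf (measurableSet_singleton 1), ?_⟩
  filter_upwards [h01] with x hx
  rcases hx with h0 | h1
  · have : x ∉ {x | ⇑f x = 1} := by simp [Set.mem_setOf_eq, h0]
    simp [Set.indicator_apply, this, h0]
  · simp [Set.indicator_apply, h1]

lemma dd_abs_setIntegral_le (ρ : Measure X) {f : X → ℝ} (hf : Integrable f ρ) (A : Set X) :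
    |∫ x in A, f x ∂ρ| ≤ ∫ x in A, |f x| ∂ρ := by
  simpa [Real.norm_eq_abs] using
    norm_integral_le_integral_norm (μ := ρ.restrict A) (f := f)

lemma dd_setIntegral_union_diff (ρ : Measure X) {f : X → ℝ} (hf : Integrable f ρ)
    {A B : Set X} (hA : MeasurableSet A) (hB : MeasurableSet B) :
    ∫ x in B ∪ A, f x ∂ρ = (∫ x in B \ A, f x ∂ρ) + ∫ x in A, f x ∂ρ := by
  rw [show B ∪ A = (B \ A) ∪ A by rw [Set.diff_union_self]]
  exact setIntegral_union disjoint_sdiff_self_left hA hf.integrableOn hf.integrableOn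

lemma dd_unif_absCont (ρ : Measure X) [IsFiniteMeasure ρ] (w : ℕ → X → ℝ)
    (hw : ∀ n, Integrable (w n) ρ)
    (hconv : ∀ A : Set X, MeasurableSet A →
      ∃ c, Tendsto (fun n => ∫ x in A, w n x ∂ρ) atTop (𝓝 c))
    {ε : ℝ} (hε : 0 < ε) :
    ∃ δ > 0, ∀ (n : ℕ) (A : Set X), MeasurableSet A → ρ A ≤ ENNReal.ofReal δ →
      |∫ x in A, w n x ∂ρ| ≤ ε := by
  classical
  set S : Set (Lp ℝ 1 ρ) := {f | ∃ A : Set X, MeasurableSet A ∧ ⇑f =ᵐ[ρ] A.indicator 1}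
    with hS
  haveI : CompleteSpace S := (dd_S_closed ρ).completeSpace_coe
  have h0S : (0 : Lp ℝ 1 ρ) ∈ S := by
    refine ⟨∅, MeasurableSet.empty, ?_⟩
    filter_upwards [Lp.coeFn_zero (E := ℝ) (p := 1) (μ := ρ)] with x hx
    simpa using hx
  haveI : Nonempty S := ⟨⟨0, h0S⟩⟩
  set Φ : ℕ → S → ℝ := fun n f => ∫ x, (⇑(f : Lp ℝ 1 ρ)) x * w n x ∂ρ with hΦ
  -- value of Φ on indicators
  have hΦeq : ∀ (n : ℕ) (f : S) (A : Set X), MeasurableSet A →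
      (⇑(f : Lp ℝ 1 ρ) =ᵐ[ρ] A.indicator 1) → Φ n f = ∫ x in A, w n x ∂ρ := by
    intro n f A hA hfA
    have h1 : Φ n f = ∫ x, A.indicator 1 x * w n x ∂ρ := by
      refine integral_congr_ae ?_
      filter_upwards [hfA] with x hx
      rw [hx]
    rw [h1, show (fun x => A.indicator 1 x * w n x) = A.indicator (w n) by
      funext x; by_cases h : x ∈ A <;> simp [Set.indicator_apply, h]]
    exact integral_indicator hA
  -- continuity of Φ n
  have hΦcont : ∀ n, Continuous (Φ n) := by
    intro n
    rw [Metric.continuous_iff]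
    rintro ⟨f₀, A₀, hA₀, hf₀⟩ ε' hε'
    obtain ⟨δ₁, hδ₁, hP⟩ := dd_absCont ρ (hw n) (show (0:ℝ) < ε'/3 by linarith)
    refine ⟨δ₁, hδ₁, ?_⟩
    rintro ⟨f, A, hA, hf⟩ hdist
    have hdist' : dist (⟨f, A, hA, hf⟩ : S) (⟨f₀, A₀, hA₀, hf₀⟩ : S)
        = (ρ (symmDiff A A₀)).toReal := by
      rw [Subtype.dist_eq]; exact dd_dist ρ hA hA₀ hf hf₀
    have hsd : ρ (symmDiff A A₀) ≤ ENNReal.ofReal δ₁ := by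
      rw [hdist'] at hdist
      have : ρ (symmDiff A A₀) ≠ ⊤ := measure_ne_top _ _
      rw [← ENNReal.ofReal_toReal this]
      exact ENNReal.ofReal_le_ofReal hdist.le
    have hsub1 : ρ (A \ A₀) ≤ ENNReal.ofReal δ₁ :=
      le_trans (measure_mono fun x hx => Or.inl hx) hsd
    have hsub2 : ρ (A₀ \ A) ≤ ENNReal.ofReal δ₁ :=
      le_trans (measure_mono fun x hx => Or.inr hx) hsd
    have e1 : Φ n ⟨f, A, hA, hf⟩ = ∫ x in A, w n x ∂ρ := hΦeq n _ A hA hf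
    have e2 : Φ n ⟨f₀, A₀, hA₀, hf₀⟩ = ∫ x in A₀, w n x ∂ρ := hΦeq n _ A₀ hA₀ hf₀
    have key : ∫ x in A, w n x ∂ρ - ∫ x in A₀, w n x ∂ρ
        = (∫ x in A \ A₀, w n x ∂ρ) - ∫ x in A₀ \ A, w n x ∂ρ := by
      have u1 := dd_setIntegral_union_diff ρ (hw n) hA₀ hA
      have u2 := dd_setIntegral_union_diff ρ (hw n) hA hA₀
      rw [Set.union_comm] at u2
      have : (∫ x in A \ A₀, w n x ∂ρ) + ∫ x in A₀, w n x ∂ρ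
          = (∫ x in A₀ \ A, w n x ∂ρ) + ∫ x in A, w n x ∂ρ := by
        rw [← u1, ← u2]
      linarith
    rw [Real.dist_eq, e1, e2, key]
    have b1 : |∫ x in A \ A₀, w n x ∂ρ| ≤ ε'/3 :=
      le_trans (dd_abs_setIntegral_le ρ (hw n) _) (hP _ (hA.diff hA₀) hsub1)
    have b2 : |∫ x in A₀ \ A, w n x ∂ρ| ≤ ε'/3 :=
      le_trans (dd_abs_setIntegral_le ρ (hw n) _) (hP _ (hA₀.diff hA) hsub2)
    calc |(∫ x in A \ A₀, w n x ∂ρ) - ∫ x in A₀ \ A, w n x ∂ρ|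
        ≤ |∫ x in A \ A₀, w n x ∂ρ| + |∫ x in A₀ \ A, w n x ∂ρ| := abs_sub _ _
      _ ≤ ε'/3 + ε'/3 := add_le_add b1 b2
      _ < ε' := by linarith
  -- the closed sets
  set E : ℕ → Set S := fun k =>
    ⋂ (m : ℕ) (n : ℕ), {f | |Φ (max k n) f - Φ (max k m) f| ≤ ε/3} with hE
  have hEclosed : ∀ k, IsClosed (E k) := by
    intro k
    refine isClosed_iInter fun m => isClosed_iInter fun n => ?_
    exact isClosed_le (((hΦcont _).sub (hΦcont _)).abs) continuous_const
  have hEcover : (⋃ k, E k) = univ := by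
    refine eq_univ_of_forall fun f => ?_
    obtain ⟨A, hA, hfA⟩ := f.2
    obtain ⟨c, hc⟩ := hconv A hA
    rw [Metric.tendsto_atTop] at hc
    obtain ⟨k, hk⟩ := hc (ε/6) (by linarith)
    refine mem_iUnion.2 ⟨k, ?_⟩
    simp only [hE, mem_iInter, mem_setOf_eq]
    intro m n
    have h1 : Φ (max k n) f = ∫ x in A, w (max k n) x ∂ρ := hΦeq _ _ A hA hfA
    have h2 : Φ (max k m) f = ∫ x in A, w (max k m) x ∂ρ := hΦeq _ _ A hA hfA
    rw [h1, h2]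
    have d1 := hk (max k n) (le_max_left _ _)
    have d2 := hk (max k m) (le_max_left _ _)
    rw [Real.dist_eq] at d1 d2
    calc |(∫ x in A, w (max k n) x ∂ρ) - ∫ x in A, w (max k m) x ∂ρ|
        ≤ |(∫ x in A, w (max k n) x ∂ρ) - c| + |(∫ x in A, w (max k m) x ∂ρ) - c| := by
          have := abs_sub ((∫ x in A, w (max k n) x ∂ρ) - c)
            ((∫ x in A, w (max k m) x ∂ρ) - c)
          simpa using this
      _ ≤ ε/3 := by linarith
  obtain ⟨k, hkint⟩ := nonempty_interior_of_iUnion_of_closed hEclosed hEcover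
  obtain ⟨f₀, hf₀int⟩ := hkint
  obtain ⟨r, hr, hball⟩ := Metric.isOpen_iff.1 isOpen_interior f₀ hf₀int
  have hballE : Metric.ball f₀ r ⊆ E k := le_trans hball interior_subset
  obtain ⟨A₀, hA₀, hf₀A⟩ := f₀.2
  -- the δ's for indices ≤ k
  choose δf hδfpos hδfP using fun j : ℕ =>
    dd_absCont ρ (hw j) (show (0:ℝ) < ε/3 by linarith)
  set δ : ℝ := min (r/2) ((Finset.range (k+1)).inf' ⟨0, by simp⟩ δf) with hδdef
  have hδpos : 0 < δ := by
    refine lt_min (by linarith) ?_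
    refine (Finset.lt_inf'_iff _).2 ?_
    exact fun j _ => hδfpos j
  refine ⟨δ, hδpos, fun n A hA hρA => ?_⟩
  have hsmall : ∀ j ≤ k, |∫ x in A, w j x ∂ρ| ≤ ε/3 := by
    intro j hj
    refine le_trans (dd_abs_setIntegral_le ρ (hw j) _) (hδfP j A hA ?_)
    refine le_trans hρA (ENNReal.ofReal_le_ofReal ?_)
    exact le_trans (min_le_right _ _)
      (Finset.inf'_le _ (Finset.mem_range.2 (Nat.lt_succ_of_le hj)))
  rcases le_or_gt n k with hnk | hnk
  · linarith [hsmall n hnk, abs_nonneg (∫ x in A, w n x ∂ρ)]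
  have hmem : ∀ (B : Set X), MeasurableSet B → symmDiff B A₀ ⊆ A →
      |(∫ x in B, w n x ∂ρ) - (∫ x in B, w k x ∂ρ)| ≤ ε/3 := by
    intro B hB hBA
    have hcoe : ⇑(indicatorConstLp 1 hB (measure_ne_top ρ B) (1:ℝ)) =ᵐ[ρ] B.indicator 1 := by
      filter_upwards [indicatorConstLp_coeFn (p := 1) (hs := hB)
        (hμs := measure_ne_top ρ B) (c := (1:ℝ))] with x hx
      exact hx
    set fB : S := ⟨indicatorConstLp 1 hB (measure_ne_top ρ B) (1:ℝ), ⟨B, hB, hcoe⟩⟩ with hfB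
    have hfBE : fB ∈ E k := by
      refine hballE ?_
      rw [Metric.mem_ball, Subtype.dist_eq]
      have hd : dist (indicatorConstLp 1 hB (measure_ne_top ρ B) (1:ℝ)) (f₀ : Lp ℝ 1 ρ)
          = (ρ (symmDiff B A₀)).toReal := dd_dist ρ hB hA₀ hcoe hf₀A
      rw [show ((fB : Lp ℝ 1 ρ)) = indicatorConstLp 1 hB (measure_ne_top ρ B) (1:ℝ) from rfl, hd]
      have h1 : ρ (symmDiff B A₀) ≤ ENNReal.ofReal (r/2) :=
        le_trans (measure_mono hBA) (le_trans hρA (ENNReal.ofReal_le_ofReal (min_le_left _ _)))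
      have := ENNReal.toReal_le_of_le_ofReal (by linarith) h1
      linarith
    simp only [hE, mem_iInter, mem_setOf_eq] at hfBE
    have e0 := hfBE k n
    rw [max_self, max_eq_right hnk.le] at e0
    rwa [hΦeq n fB B hB hcoe, hΦeq k fB B hB hcoe] at e0
  have e1 := hmem (A₀ ∪ A) (hA₀.union hA) (by
    rw [Set.symmDiff_def]
    rintro x (⟨hx1, hx2⟩ | ⟨hx1, hx2⟩)
    · rcases hx1 with h | h; · exact absurd h hx2
      exact h
    · exact absurd (Or.inl hx1) hx2)
  have e2 := hmem (A₀ \ A) (hA₀.diff hA) (by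
    rw [Set.symmDiff_def]
    rintro x (⟨⟨hx1, hx2⟩, hx3⟩ | ⟨hx1, hx2⟩)
    · exact absurd hx1 hx3
    · by_contra hxA
      exact hx2 ⟨hx1, hxA⟩)
  have add1 := dd_setIntegral_union_diff ρ (hw n) hA hA₀
  have add2 := dd_setIntegral_union_diff ρ (hw k) hA hA₀
  have hk' := hsmall k le_rfl
  have habs : |(∫ x in A, w n x ∂ρ) - (∫ x in A, w k x ∂ρ)| ≤ 2*ε/3 := by
    have : (∫ x in A, w n x ∂ρ) - (∫ x in A, w k x ∂ρ)
        = ((∫ x in A₀ ∪ A, w n x ∂ρ) - (∫ x in A₀ ∪ A, w k x ∂ρ))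
          - ((∫ x in A₀ \ A, w n x ∂ρ) - (∫ x in A₀ \ A, w k x ∂ρ)) := by
      rw [add1, add2]; ring
    rw [this]
    calc |_| ≤ |(∫ x in A₀ ∪ A, w n x ∂ρ) - (∫ x in A₀ ∪ A, w k x ∂ρ)|
        + |(∫ x in A₀ \ A, w n x ∂ρ) - (∫ x in A₀ \ A, w k x ∂ρ)| := abs_sub _ _
      _ ≤ 2*ε/3 := by linarith
  calc |∫ x in A, w n x ∂ρ|
      ≤ |(∫ x in A, w n x ∂ρ) - (∫ x in A, w k x ∂ρ)| + |∫ x in A, w k x ∂ρ| := by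
        have := abs_add_le ((∫ x in A, w n x ∂ρ) - (∫ x in A, w k x ∂ρ)) (∫ x in A, w k x ∂ρ)
        simpa using this
    _ ≤ ε := by linarith

lemma dd_lintegral_biUnion_le (ρ : Measure X) (g : X → ℝ≥0∞) (T : Finset X) (s : X → Set X) :
    ∫⁻ x in ⋃ y ∈ T, s y, g x ∂ρ ≤ ∑ y ∈ T, ∫⁻ x in s y, g x ∂ρ := by
  classical
  induction T using Finset.induction with
  | empty => simp
  | @insert a t ha ih =>
    rw [Finset.set_biUnion_insert, Finset.sum_insert ha]
    exact le_trans (lintegral_union_le _ _ _) (add_le_add le_rfl ih)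

lemma dd_unif_bound (ρ : Measure X) [IsFiniteMeasure ρ] (w : ℕ → X → ℝ)
    (hw : ∀ n, Integrable (w n) ρ) (hwm : ∀ n, StronglyMeasurable (w n))
    (hconv : ∀ A : Set X, MeasurableSet A →
      ∃ c, Tendsto (fun n => ∫ x in A, w n x ∂ρ) atTop (𝓝 c))
    {δ : ℝ} (hδ : 0 < δ)
    (habs : ∀ (n : ℕ) (A : Set X), MeasurableSet A → ρ A ≤ ENNReal.ofReal δ →
      |∫ x in A, w n x ∂ρ| ≤ 1) :
    ∃ M : ℝ, ∀ n, ∫ x, |w n x| ∂ρ ≤ M := by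
  classical
  -- |w n| version of the uniform absolute continuity
  have habs2 : ∀ (n : ℕ) (A : Set X), MeasurableSet A → ρ A ≤ ENNReal.ofReal δ →
      ∫ x in A, |w n x| ∂ρ ≤ 2 := by
    intro n A hA hρA
    set P : Set X := {x | 0 ≤ w n x} with hP
    have hPm : MeasurableSet P := measurableSet_le measurable_const (hwm n).measurable
    have hsplit : A = (A \ P) ∪ (A ∩ P) := by
      rw [Set.diff_union_inter]
    have habsint : Integrable (fun x => |w n x|) ρ := (hw n).abs
    have e : ∫ x in A, |w n x| ∂ρ
        = (∫ x in A \ P, |w n x| ∂ρ) + ∫ x in A ∩ P, |w n x| ∂ρ := by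
      conv_lhs => rw [hsplit]
      exact setIntegral_union (disjoint_sdiff_self_left.mono_right Set.inter_subset_right)
        (hA.inter hPm) habsint.integrableOn habsint.integrableOn
    have e1 : ∫ x in A ∩ P, |w n x| ∂ρ = ∫ x in A ∩ P, w n x ∂ρ := by
      refine setIntegral_congr_fun (hA.inter hPm) fun x hx => ?_
      exact abs_of_nonneg hx.2
    have e2 : ∫ x in A \ P, |w n x| ∂ρ = - ∫ x in A \ P, w n x ∂ρ := by
      rw [← integral_neg]
      refine setIntegral_congr_fun (hA.diff hPm) fun x hx => ?_
      have : w n x < 0 := lt_of_not_ge hx.2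
      simp [abs_of_neg this]
    have b1 : |∫ x in A ∩ P, w n x ∂ρ| ≤ 1 :=
      habs n _ (hA.inter hPm) (le_trans (measure_mono Set.inter_subset_left) hρA)
    have b2 : |∫ x in A \ P, w n x ∂ρ| ≤ 1 :=
      habs n _ (hA.diff hPm) (le_trans (measure_mono Set.diff_subset) hρA)
    rw [e, e1, e2]
    have := abs_le.1 b1
    have := abs_le.1 b2
    linarith
  -- lintegral version
  have habs3 : ∀ (n : ℕ) (A : Set X), MeasurableSet A → ρ A ≤ ENNReal.ofReal δ →
      ∫⁻ x in A, (‖w n x‖₊ : ℝ≥0∞) ∂ρ ≤ ENNReal.ofReal 2 := by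
    intro n A hA hρA
    have hi : Integrable (w n) (ρ.restrict A) := (hw n).restrict
    rw [show ∫⁻ x in A, (‖w n x‖₊ : ℝ≥0∞) ∂ρ = ENNReal.ofReal (∫ x in A, ‖w n x‖ ∂ρ) from
      (ofReal_integral_norm_eq_lintegral_enorm hi).symm]
    refine ENNReal.ofReal_le_ofReal ?_
    simp_rw [Real.norm_eq_abs]
    exact habs2 n A hA hρA
  -- neighborhoods with small punctured measure
  have hU : ∀ x : X, ∃ U : Set X, IsOpen U ∧ x ∈ U ∧ ρ (U \ {x}) ≤ ENNReal.ofReal δ := by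
    intro x
    set F : ℕ → Set X := fun m => Metric.ball x (1/(m+1)) \ {x} with hF
    have hFm : ∀ m, NullMeasurableSet (F m) ρ :=
      fun m => (Metric.isOpen_ball.measurableSet.diff (measurableSet_singleton x)).nullMeasurableSet
    have hFanti : Antitone F := by
      intro a b hab
      refine Set.diff_subset_diff_left (Metric.ball_subset_ball ?_)
      have h1 : (0:ℝ) < a + 1 := by positivity
      have h2 : (a:ℝ) + 1 ≤ (b:ℝ) + 1 := by exact_mod_cast Nat.succ_le_succ hab
      exact one_div_le_one_div_of_le h1 h2
    have hiInter : (⋂ m, F m) = ∅ := by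
      ext y
      simp only [Set.mem_iInter, Set.mem_empty_iff_false, iff_false]
      intro hy
      have hne : y ≠ x := (hy 0).2
      have hd : 0 < dist y x := dist_pos.2 hne
      obtain ⟨m, hm⟩ := exists_nat_one_div_lt hd
      have := (hy m).1
      rw [Metric.mem_ball] at this
      linarith
    have htend : Tendsto (fun m => ρ (F m)) atTop (𝓝 (ρ (⋂ m, F m))) :=
      tendsto_measure_iInter_atTop hFm hFanti ⟨0, measure_ne_top _ _⟩
    rw [hiInter, measure_empty] at htend
    have hpos : (0:ℝ≥0∞) < ENNReal.ofReal δ := ENNReal.ofReal_pos.2 hδ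
    have := htend.eventually_lt_const hpos
    obtain ⟨m, hm⟩ := this.exists
    exact ⟨Metric.ball x (1/(m+1)), Metric.isOpen_ball, by
      simp [Metric.mem_ball]; positivity, hm.le⟩
  choose U hUopen hUmem hUsmall using hU
  -- compactness: finite subcover
  obtain ⟨T, hT⟩ := isCompact_univ.elim_finite_subcover U hUopen
    (fun x _ => Set.mem_iUnion.2 ⟨x, hUmem x⟩)
  -- bound on singletons
  have hsing : ∀ x : X, ∃ B : ℝ, 0 ≤ B ∧ ∀ n,
      (‖w n x‖₊ : ℝ≥0∞) * ρ {x} ≤ ENNReal.ofReal B := by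
    intro x
    obtain ⟨c, hc⟩ := hconv {x} (measurableSet_singleton x)
    have habs' : Tendsto (fun n => |∫ y in {x}, w n y ∂ρ|) atTop (𝓝 |c|) := hc.abs
    obtain ⟨B, hB⟩ := habs'.bddAbove_range
    have hBmem : ∀ n, |∫ y in {x}, w n y ∂ρ| ≤ B := fun n => hB ⟨n, rfl⟩
    refine ⟨B, le_trans (abs_nonneg _) (hBmem 0), fun n => ?_⟩
    have e : ∫ y in {x}, w n y ∂ρ = (ρ {x}).toReal • w n x := integral_singleton _ _
    have e2 : (‖w n x‖₊ : ℝ≥0∞) * ρ {x} = ENNReal.ofReal (|w n x| * (ρ {x}).toReal) := by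
      rw [ENNReal.ofReal_mul (abs_nonneg _), ← Real.enorm_eq_ofReal_abs,
        ENNReal.ofReal_toReal (measure_ne_top _ _), enorm_eq_nnnorm]
    rw [e2]
    refine ENNReal.ofReal_le_ofReal ?_
    have := hBmem n
    rw [e, smul_eq_mul, abs_mul, abs_of_nonneg ENNReal.toReal_nonneg] at this
    linarith [this]
  choose B hBnonneg hBle using hsing
  set M : ℝ := ∑ x ∈ T, (B x + 2) with hM
  refine ⟨M, fun n => ?_⟩
  -- the covering pieces
  set s : X → Set X := fun x => {x} ∪ (U x \ (↑T : Set X)) with hs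
  have hcover : (Set.univ : Set X) ⊆ ⋃ x ∈ T, s x := by
    intro y _
    obtain ⟨x, hx⟩ := Set.mem_iUnion.1 (hT (Set.mem_univ y))
    obtain ⟨hxT, hyU⟩ := Set.mem_iUnion.1 hx
    by_cases hyT : y ∈ (↑T : Set X)
    · exact Set.mem_biUnion hyT (Or.inl rfl)
    · exact Set.mem_biUnion hxT (Or.inr ⟨hyU, hyT⟩)
  have hpiece : ∀ x ∈ T, ∫⁻ y in s x, (‖w n y‖₊ : ℝ≥0∞) ∂ρ
      ≤ ENNReal.ofReal (B x) + ENNReal.ofReal 2 := by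
    intro x hxT
    refine le_trans (lintegral_union_le _ _ _) (add_le_add ?_ ?_)
    · rw [lintegral_singleton' ((hwm n).measurable.nnnorm.coe_nnreal_ennreal)]
      exact hBle x n
    · refine habs3 n _ ((hUopen x).measurableSet.diff T.finite_toSet.measurableSet) ?_
      refine le_trans (measure_mono ?_) (hUsmall x)
      exact Set.diff_subset_diff_right (Set.singleton_subset_iff.2 hxT)
  -- put the pieces together
  have hbound : ∫⁻ y, (‖w n y‖₊ : ℝ≥0∞) ∂ρ ≤ ENNReal.ofReal M := by
    have h1 : ∫⁻ y, (‖w n y‖₊ : ℝ≥0∞) ∂ρ = ∫⁻ y in Set.univ, (‖w n y‖₊ : ℝ≥0∞) ∂ρ := by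
      rw [Measure.restrict_univ]
    rw [h1]
    refine le_trans (lintegral_mono_set hcover) ?_
    refine le_trans (dd_lintegral_biUnion_le ρ _ T s) ?_
    refine le_trans (Finset.sum_le_sum hpiece) ?_
    have hsum : ∑ x ∈ T, (ENNReal.ofReal (B x) + ENNReal.ofReal 2)
        = ENNReal.ofReal M := by
      rw [hM, ENNReal.ofReal_sum_of_nonneg (fun x _ => by linarith [hBnonneg x])]
      refine Finset.sum_congr rfl fun x _ => ?_
      rw [ENNReal.ofReal_add (hBnonneg x) (by norm_num)]
    rw [hsum]
  have e : ∫ x, |w n x| ∂ρ = (∫⁻ y, (‖w n y‖₊ : ℝ≥0∞) ∂ρ).toReal := by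
    rw [show (∫⁻ y, (‖w n y‖₊ : ℝ≥0∞) ∂ρ) = ∫⁻ y, ‖w n y‖ₑ ∂ρ from rfl,
      ← integral_norm_eq_lintegral_enorm (hw n).aestronglyMeasurable]
    simp [Real.norm_eq_abs]
  rw [e]
  refine ENNReal.toReal_le_of_le_ofReal ?_ hbound
  have : (0:ℝ) ≤ ∑ x ∈ T, (B x + 2) := Finset.sum_nonneg fun x _ => by linarith [hBnonneg x]
  simpa [hM] using this

lemma dd_exists_v (ρ : Measure X) [IsFiniteMeasure ρ] (w : ℕ → X → ℝ)
    (hw : ∀ n, Integrable (w n) ρ)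
    (hconv : ∀ A : Set X, MeasurableSet A →
      ∃ c, Tendsto (fun n => ∫ x in A, w n x ∂ρ) atTop (𝓝 c)) :
    ∃ v : X → ℝ, Integrable v ρ ∧ ∀ A : Set X, MeasurableSet A →
      Tendsto (fun n => ∫ x in A, w n x ∂ρ) atTop (𝓝 (∫ x in A, v x ∂ρ)) := by
  classical
  choose c hc using hconv
  set m : Set X → ℝ := fun A => if h : MeasurableSet A then c A h else 0 with hmdef
  have hm : ∀ (A : Set X) (h : MeasurableSet A),
      Tendsto (fun n => ∫ x in A, w n x ∂ρ) atTop (𝓝 (m A)) := by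
    intro A h
    rw [hmdef]
    simp only [dif_pos h]
    exact hc A h
  -- uniform smallness of the limit
  have hUA : ∀ ε : ℝ, 0 < ε → ∃ δ > 0, ∀ A : Set X, MeasurableSet A →
      ρ A ≤ ENNReal.ofReal δ → |m A| ≤ ε := by
    intro ε hε
    obtain ⟨δ, hδpos, hδ⟩ := dd_unif_absCont ρ w hw (fun A hA => ⟨c A hA, hc A hA⟩) hε
    refine ⟨δ, hδpos, fun A hA hρA => ?_⟩
    have habs : Tendsto (fun n => |∫ x in A, w n x ∂ρ|) atTop (𝓝 |m A|) := (hm A hA).abs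
    exact le_of_tendsto habs (Eventually.of_forall fun n => hδ n A hA hρA)
  -- finite additivity
  have hadd : ∀ A B : Set X, MeasurableSet A → MeasurableSet B → Disjoint A B →
      m (A ∪ B) = m A + m B := by
    intro A B hA hB hAB
    have h1 : ∀ n, ∫ x in A ∪ B, w n x ∂ρ = (∫ x in A, w n x ∂ρ) + ∫ x in B, w n x ∂ρ :=
      fun n => setIntegral_union hAB hB (hw n).integrableOn (hw n).integrableOn
    have h2 : Tendsto (fun n => ∫ x in A ∪ B, w n x ∂ρ) atTop (𝓝 (m A + m B)) := by
      simp only [h1]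
      exact ((hm A hA).add (hm B hB))
    exact tendsto_nhds_unique (hm _ (hA.union hB)) h2
  have hfin : ∀ (A : ℕ → Set X), (∀ i, MeasurableSet (A i)) →
      Pairwise (Function.onFun Disjoint A) → ∀ t : Finset ℕ,
      m (⋃ i ∈ t, A i) = ∑ i ∈ t, m (A i) := by
    intro A hAm hdisj t
    have h1 : ∀ n, ∫ x in ⋃ i ∈ t, A i, w n x ∂ρ = ∑ i ∈ t, ∫ x in A i, w n x ∂ρ :=
      fun n => integral_biUnion_finset t (fun i _ => hAm i)
        (hdisj.set_pairwise _) (fun i _ => (hw n).integrableOn)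
    have h2 : Tendsto (fun n => ∫ x in ⋃ i ∈ t, A i, w n x ∂ρ)
        atTop (𝓝 (∑ i ∈ t, m (A i))) := by
      simp only [h1]
      exact tendsto_finset_sum t fun i _ => hm (A i) (hAm i)
    exact tendsto_nhds_unique (hm _ (t.measurableSet_biUnion fun i _ => hAm i)) h2
  -- the signed measure
  set σ : SignedMeasure X :=
    { measureOf' := m
      empty' := by
        have h0 : Tendsto (fun n : ℕ => ∫ x in (∅ : Set X), w n x ∂ρ) atTop (𝓝 0) := by
          simp
        exact tendsto_nhds_unique (hm ∅ MeasurableSet.empty) h0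
      not_measurable' := fun A hA => by rw [hmdef]; exact dif_neg hA
      m_iUnion' := by
        intro A hAm hdisj
        show Tendsto (fun t : Finset ℕ => ∑ i ∈ t, m (A i)) atTop (𝓝 (m (⋃ i, A i)))
        rw [Metric.tendsto_nhds]
        intro ε hε
        obtain ⟨δ, hδpos, hδ⟩ := hUA (ε/2) (by linarith)
        -- tail measures tend to zero
        have htail : Tendsto (fun N => ρ (⋃ (i : ℕ) (_ : N ≤ i), A i)) atTop (𝓝 0) := by
          have hsum : ∑' i, ρ (A i) ≠ ⊤ := by
            rw [← measure_iUnion hdisj hAm]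
            exact measure_ne_top _ _
          have h1 := ENNReal.tendsto_sum_nat_add (fun i => ρ (A i)) hsum
          refine tendsto_of_tendsto_of_tendsto_of_le_of_le tendsto_const_nhds h1
            (fun N => zero_le) (fun N => ?_)
          refine le_trans (measure_mono ?_) (measure_iUnion_le _)
          rintro x hx
          obtain ⟨i, hi⟩ := Set.mem_iUnion.1 hx
          obtain ⟨hNi, hxi⟩ := Set.mem_iUnion.1 hi
          refine Set.mem_iUnion.2 ⟨i - N, ?_⟩
          rwa [Nat.sub_add_cancel hNi]
        have hev := htail.eventually_lt_const (ENNReal.ofReal_pos.2 hδpos)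
        obtain ⟨N, hN⟩ := hev.exists
        refine eventually_atTop.2 ⟨Finset.range N, fun t ht => ?_⟩
        have hsub : m (⋃ i, A i) = m (⋃ i ∈ t, A i) + m ((⋃ i, A i) \ ⋃ i ∈ t, A i) := by
          rw [← hadd _ _ (t.measurableSet_biUnion fun i _ => hAm i)
            ((MeasurableSet.iUnion hAm).diff (t.measurableSet_biUnion fun i _ => hAm i))
            disjoint_sdiff_self_right]
          rw [Set.union_diff_cancel (Set.iUnion₂_subset fun i _ => Set.subset_iUnion A i)]
        have hDsmall : |m ((⋃ i, A i) \ ⋃ i ∈ t, A i)| ≤ ε/2 := by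
          refine hδ _ ((MeasurableSet.iUnion hAm).diff
            (t.measurableSet_biUnion fun i _ => hAm i)) ?_
          refine le_trans (measure_mono ?_) hN.le
          rintro x ⟨hx1, hx2⟩
          obtain ⟨i, hxi⟩ := Set.mem_iUnion.1 hx1
          have hit : i ∉ t := fun h => hx2 (Set.mem_biUnion h hxi)
          have hiN : N ≤ i := by
            by_contra h
            exact hit (ht (Finset.mem_range.2 (lt_of_not_ge h)))
          exact Set.mem_iUnion.2 ⟨i, Set.mem_iUnion.2 ⟨hiN, hxi⟩⟩
        rw [Real.dist_eq, hsub, hfin A hAm hdisj t]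
        rw [show ∑ i ∈ t, m (A i) - (∑ i ∈ t, m (A i)
          + m ((⋃ i, A i) \ ⋃ i ∈ t, A i)) = -(m ((⋃ i, A i) \ ⋃ i ∈ t, A i)) by ring]
        rw [abs_neg]
        linarith } with hσ
  have hσapp : ∀ A : Set X, σ A = m A := fun A => rfl
  -- absolute continuity
  have hac : σ ≪ᵥ ρ.toENNRealVectorMeasure := by
    intro s hs
    by_cases h : MeasurableSet s
    · rw [Measure.toENNRealVectorMeasure_apply_measurable h] at hs
      rw [hσapp]
      by_contra hne
      have habs : 0 < |m s| := abs_pos.2 hne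
      obtain ⟨δ, hδpos, hδ⟩ := hUA (|m s|/2) (by linarith)
      have : |m s| ≤ |m s|/2 := hδ s h (by rw [hs]; exact zero_le)
      linarith
    · exact σ.not_measurable h
  set v : X → ℝ := σ.rnDeriv ρ with hv
  have hvint : Integrable v ρ := SignedMeasure.integrable_rnDeriv σ ρ
  have heq : ρ.withDensityᵥ v = σ := SignedMeasure.withDensityᵥ_rnDeriv_eq σ ρ hac
  refine ⟨v, hvint, fun A hA => ?_⟩
  have h1 : ∫ x in A, v x ∂ρ = σ A := by
    rw [← heq, withDensityᵥ_apply hvint hA]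
  rw [h1, hσapp]
  exact hm A hA

end DieudonneAux

/-- Dieudonné's theorem: for a finite regular Borel measure `ρ` on a compact metric space
`X`, a sequence `(uₙ) ⊂ L¹(X, ρ)` converges weakly in `L¹` to some `u ∈ L¹(X, ρ)` (i.e.
`∫ uₙ·g dρ → ∫ u·g dρ` for every bounded measurable `g`, the elements of `L^∞(X, ρ)`) if
and only if for every Borel set `A ⊆ X` the limit `lim_n ∫_A uₙ dρ` exists and is finite. -/
theorem dieudonne_weak_L1_convergence
    {X : Type*} [MetricSpace X] [CompactSpace X] [MeasurableSpace X] [BorelSpace X]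
    (ρ : Measure X) [IsFiniteMeasure ρ] [ρ.Regular]
    (u : ℕ → X → ℝ) (hu : ∀ n, Integrable (u n) ρ) :
    (∃ v : X → ℝ, Integrable v ρ ∧
        ∀ g : X → ℝ, Measurable g → (∃ C : ℝ, ∀ x, |g x| ≤ C) →
          Tendsto (fun n => ∫ x, u n x * g x ∂ρ) atTop (nhds (∫ x, v x * g x ∂ρ)))
      ↔ ∀ A : Set X, MeasurableSet A →
          ∃ c : ℝ, Tendsto (fun n => ∫ x in A, u n x ∂ρ) atTop (nhds c) := by
  classical
  constructor
  · -- easy direction: test against indicator functions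
    rintro ⟨v, hvint, hvconv⟩ A hA
    set g : X → ℝ := A.indicator (fun _ => 1) with hg
    have hgmeas : Measurable g := measurable_const.indicator hA
    have hgbdd : ∃ C : ℝ, ∀ x, |g x| ≤ C := by
      refine ⟨1, fun x => ?_⟩
      by_cases h : x ∈ A <;> simp [hg, Set.indicator_apply, h]
    have key : ∀ f : X → ℝ, (fun x => f x * g x) = A.indicator f := by
      intro f
      funext x
      by_cases h : x ∈ A <;> simp [hg, Set.indicator_apply, h]
    have := hvconv g hgmeas hgbdd
    simp only [key, integral_indicator hA] at this
    exact ⟨∫ x in A, v x ∂ρ, this⟩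
  · -- hard direction
    intro H
    -- replace u by a strongly measurable representative w
    set w : ℕ → X → ℝ := fun n => (hu n).1.mk (u n) with hwdef
    have hwm : ∀ n, StronglyMeasurable (w n) := fun n => (hu n).1.stronglyMeasurable_mk
    have hwae : ∀ n, u n =ᵐ[ρ] w n := fun n => (hu n).1.ae_eq_mk
    have hwint : ∀ n, Integrable (w n) ρ := fun n => (hu n).congr (hwae n)
    have hsame : ∀ (n : ℕ) (A : Set X), ∫ x in A, w n x ∂ρ = ∫ x in A, u n x ∂ρ :=
      fun n A => integral_congr_ae (ae_restrict_of_ae (hwae n).symm)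
    have hconvw : ∀ A : Set X, MeasurableSet A →
        ∃ c, Tendsto (fun n => ∫ x in A, w n x ∂ρ) atTop (𝓝 c) := by
      intro A hA
      obtain ⟨c, hc⟩ := H A hA
      exact ⟨c, by simpa only [hsame] using hc⟩
    obtain ⟨v, hvint, hvlim⟩ := dd_exists_v ρ w hwint hconvw
    obtain ⟨δ, hδpos, hδ⟩ := dd_unif_absCont ρ w hwint hconvw one_pos
    obtain ⟨M, hM⟩ := dd_unif_bound ρ w hwint hwm hconvw hδpos hδ
    have hM0 : 0 ≤ M := le_trans (integral_nonneg fun x => abs_nonneg _) (hM 0)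
    set Mv : ℝ := ∫ x, |v x| ∂ρ with hMv
    have hMv0 : 0 ≤ Mv := integral_nonneg fun x => abs_nonneg _
    refine ⟨v, hvint, fun g hgmeas hgbdd => ?_⟩
    obtain ⟨C₀, hC₀⟩ := hgbdd
    set C : ℝ := max C₀ 0 with hCdef
    have hC : ∀ x, |g x| ≤ C := fun x => le_trans (hC₀ x) (le_max_left _ _)
    have hC0 : 0 ≤ C := le_max_right _ _
    -- integrability of products with bounded measurable functions
    have hmul : ∀ (f : X → ℝ), Integrable f ρ → ∀ (h : X → ℝ), Measurable h →
        ∀ D : ℝ, (∀ x, |h x| ≤ D) → Integrable (fun x => f x * h x) ρ := by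
      intro f hf h hh D hD
      have := Integrable.bdd_mul hf hh.aestronglyMeasurable
        (Eventually.of_forall fun x => by simpa [Real.norm_eq_abs] using hD x)
      exact this.congr (Eventually.of_forall fun x => mul_comm _ _)
    -- reduce to the measurable representatives
    have hsame2 : ∀ n, ∫ x, u n x * g x ∂ρ = ∫ x, w n x * g x ∂ρ := by
      intro n
      refine integral_congr_ae ?_
      filter_upwards [hwae n] with x hx
      rw [hx]
    simp only [hsame2]
    rw [Metric.tendsto_atTop]
    intro ε hε
    set ε' : ℝ := ε / (2*(M + Mv + 1)) with hε'def
    have hε'pos : 0 < ε' := by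
      apply div_pos hε
      nlinarith
    have hε'ne : ε' ≠ 0 := ne_of_gt hε'pos
    -- the simple approximation s of g
    set K : ℤ := ⌈C/ε'⌉ + 1 with hKdef
    set J : Finset ℤ := Finset.Icc (-K) K with hJdef
    set A : ℤ → Set X := fun j => {x | ⌊g x / ε'⌋ = j} with hAdef
    have hAmeas : ∀ j, MeasurableSet (A j) :=
      fun j => (hgmeas.div_const ε').floor (measurableSet_singleton j)
    set s : X → ℝ := fun x => (⌊g x / ε'⌋ : ℝ) * ε' with hsdef
    have hsmeas : Measurable s :=
      (measurable_from_top.comp ((hgmeas.div_const ε').floor)).mul_const ε'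
    have hgs : ∀ x, |g x - s x| ≤ ε' := by
      intro x
      have h1 := Int.floor_le (g x / ε')
      have h2 := Int.lt_floor_add_one (g x / ε')
      have h3 : g x = (g x / ε') * ε' := (div_mul_cancel₀ _ hε'ne).symm
      simp only [hsdef]
      rw [abs_le]
      constructor
      · nlinarith [mul_nonneg (sub_nonneg.2 h1) hε'pos.le]
      · nlinarith [mul_le_mul_of_nonneg_right (le_of_lt h2) hε'pos.le]
    have hsbdd : ∀ x, |s x| ≤ C + ε' := by
      intro x
      have h1 := hgs x
      have h2 := hC x
      have h := abs_sub_abs_le_abs_sub (s x) (g x)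
      rw [abs_sub_comm] at h
      linarith
    -- x belongs to A ⌊g x / ε'⌋ with index in J
    have hidx : ∀ x, ⌊g x / ε'⌋ ∈ J := by
      intro x
      have hb : |g x / ε'| ≤ C / ε' := by
        rw [abs_div, abs_of_pos hε'pos]
        exact (div_le_div_iff_of_pos_right hε'pos).2 (hC x)
      rw [hJdef, Finset.mem_Icc]
      constructor
      · rw [hKdef, Int.le_floor]
        push_cast
        have h1 : -(C/ε') ≤ g x / ε' := (abs_le.1 hb).1
        have h2 : C/ε' ≤ (⌈C/ε'⌉ : ℝ) := Int.le_ceil _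
        linarith
      · have h1 : (⌊g x / ε'⌋ : ℝ) ≤ g x / ε' := Int.floor_le _
        have h2 : g x / ε' ≤ C/ε' := (abs_le.1 hb).2
        have h3 : C/ε' ≤ (⌈C/ε'⌉ : ℝ) := Int.le_ceil _
        have h4 : (⌊g x / ε'⌋ : ℝ) ≤ ((⌈C/ε'⌉ + 1 : ℤ) : ℝ) := by push_cast; linarith
        rw [hKdef]
        exact_mod_cast h4
    -- decomposition of ∫ f·s as a finite sum
    have hdecomp : ∀ (f : X → ℝ), Integrable f ρ →
        ∫ x, f x * s x ∂ρ = ∑ j ∈ J, ((j:ℝ) * ε') * ∫ x in A j, f x ∂ρ := by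
      intro f hf
      have hptwise : (fun x => f x * s x)
          = fun x => ∑ j ∈ J, (A j).indicator (fun y => ((j:ℝ) * ε') * f y) x := by
        funext x
        rw [Finset.sum_eq_single (⌊g x / ε'⌋)]
        · rw [Set.indicator_of_mem (show x ∈ A ⌊g x / ε'⌋ from rfl)]
          simp only [hsdef]; ring
        · intro j hj hne
          refine Set.indicator_of_notMem ?_ _
          rw [hAdef]
          simpa using fun h => hne h.symm
        · intro hne
          exact absurd (hidx x) hne
      rw [hptwise, integral_finset_sum]
      · refine Finset.sum_congr rfl fun j hj => ?_
        rw [integral_indicator (hAmeas j)]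
        exact integral_const_mul _ _
      · intro j hj
        exact ((hf.const_mul _).indicator (hAmeas j))
    -- convergence along the simple function s
    have hslim : Tendsto (fun n => ∫ x, w n x * s x ∂ρ) atTop (𝓝 (∫ x, v x * s x ∂ρ)) := by
      simp only [hdecomp _ (hwint _), hdecomp _ hvint]
      exact tendsto_finset_sum _ fun j _ => (hvlim (A j) (hAmeas j)).const_mul _
    -- error bounds
    have herr : ∀ (f : X → ℝ), Integrable f ρ → ∀ Mf : ℝ, (∫ x, |f x| ∂ρ) ≤ Mf →
        |(∫ x, f x * g x ∂ρ) - ∫ x, f x * s x ∂ρ| ≤ ε' * Mf := by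
      intro f hf Mf hMf
      have hint1 : Integrable (fun x => f x * g x) ρ := hmul f hf g hgmeas C hC
      have hint2 : Integrable (fun x => f x * s x) ρ := hmul f hf s hsmeas (C + ε') hsbdd
      rw [← integral_sub hint1 hint2]
      have e : ∀ x, f x * g x - f x * s x = f x * (g x - s x) := fun x => by ring
      simp only [e]
      have h1 : |∫ x, f x * (g x - s x) ∂ρ| ≤ ∫ x, |f x * (g x - s x)| ∂ρ := by
        have := norm_integral_le_integral_norm (μ := ρ) (fun x => f x * (g x - s x))
        simp only [Real.norm_eq_abs] at this
        exact this
      refine le_trans h1 ?_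
      have h2 : ∫ x, |f x * (g x - s x)| ∂ρ ≤ ∫ x, ε' * |f x| ∂ρ := by
        refine integral_mono ((hmul f hf _ (hgmeas.sub hsmeas) ε' (fun x => hgs x)).abs)
          ((hf.abs).const_mul ε') ?_
        intro x
        show |f x * (g x - s x)| ≤ ε' * |f x|
        rw [abs_mul]
        have h5 := hgs x
        nlinarith [abs_nonneg (f x)]
      refine le_trans h2 ?_
      rw [integral_const_mul]
      have := mul_le_mul_of_nonneg_left hMf hε'pos.le
      linarith
    obtain ⟨N, hN⟩ := (Metric.tendsto_atTop.1 hslim) (ε/2) (by linarith)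
    refine ⟨N, fun n hn => ?_⟩
    have hd := hN n hn
    rw [Real.dist_eq] at hd ⊢
    have b1 := herr (w n) (hwint n) M (hM n)
    have b2 := herr v hvint Mv le_rfl
    have hfrac : ε' * (M + Mv) < ε/2 := by
      rw [hε'def]
      rw [div_mul_eq_mul_div]
      rw [div_lt_div_iff₀ (by nlinarith) (by norm_num)]
      nlinarith
    calc |(∫ x, w n x * g x ∂ρ) - ∫ x, v x * g x ∂ρ|
        ≤ |(∫ x, w n x * g x ∂ρ) - ∫ x, w n x * s x ∂ρ|
          + |(∫ x, w n x * s x ∂ρ) - ∫ x, v x * s x ∂ρ|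
          + |(∫ x, v x * s x ∂ρ) - ∫ x, v x * g x ∂ρ| := by
          have := abs_sub_le ((∫ x, w n x * g x ∂ρ)) (∫ x, w n x * s x ∂ρ)
            (∫ x, v x * g x ∂ρ)
          have := abs_sub_le ((∫ x, w n x * s x ∂ρ)) (∫ x, v x * s x ∂ρ)
            (∫ x, v x * g x ∂ρ)
          linarith
      _ < ε := by
          have h3 : |(∫ x, v x * s x ∂ρ) - ∫ x, v x * g x ∂ρ| ≤ ε' * Mv := by
            rw [abs_sub_comm]; exact b2
          have h4 : ε' * M + ε' * Mv = ε' * (M + Mv) := by ring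
          linarith
end

section
/- Let X be a compact metric space, ρ a finite Borel measure on X, and let (u_n) be a sequence of nonnegative functions in L¹(X, ρ); let ρ_n := ρ.withDensity u_n be the measures with densities u_n. Then (u_n) converges weakly in L¹(X, ρ) to some function h ∈ L¹(X, ρ) if and only if for every Borel set A ⊆ X the sequence (ρ_n(A)) converges to a finite limit; moreover, in that case the set function A ↦ lim_n ρ_n(A) is exactly the measure ρ.withDensity h. -/
/-!
If `uₙ ⇀ h`, testing against indicators gives `∫_A uₙ → ∫_A h`; this forces `h ≥ 0` a.e., so
`ρₙ(A) → (ρ.withDensity h)(A)`.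

Conversely (Vitali–Hahn–Saks), measurable sets with the distance `ρ(s ∆ t)` form a complete
metric space on which every `ρₙ ≪ ρ` is continuous. Baire's theorem applied to the closed sets
`{s | |ρₘ(s) - ρₙ(s)| ≤ ε for all m, n ≥ N}` gives a ball on which the `ρₙ` are eventually
uniformly close, and translating the ball to the origin shows that the `ρₙ` are eventually
uniformly absolutely continuous with respect to `ρ`. Hence the setwise limit is countably
additive and `≪ ρ`, i.e. equal to `ρ.withDensity h`. Setwise convergence `∫_A uₙ → ∫_A h` with
bounded `L¹` norms then yields weak convergence, since bounded measurable functions are uniform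
limits of simple functions.
-/

open MeasureTheory Filter Topology Set ENNReal

/-- `uₙ ⇀ h` weakly in `L¹(X, ρ)`: the integrals against every bounded measurable function
(i.e. every element of `L^∞(X, ρ)`) converge. -/
def WeakL1Tendsto {X : Type*} [MeasurableSpace X] (ρ : Measure X)
    (u : ℕ → X → ℝ) (h : X → ℝ) : Prop :=
  ∀ g : X → ℝ, Measurable g → (∃ C : ℝ, ∀ x, |g x| ≤ C) →
    Tendsto (fun n => ∫ x, u n x * g x ∂ρ) atTop (nhds (∫ x, h x * g x ∂ρ))

lemma tendsto_of_forall_dist_le {α ι : Type*} [PseudoMetricSpace α] {l : Filter ι} {F : ι → α}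
    {a : α} (h : ∀ ε > 0, ∃ G : ι → α, ∃ b, Tendsto G l (𝓝 b) ∧ (∀ i, dist (F i) (G i) ≤ ε) ∧
      dist a b ≤ ε) :
    Tendsto F l (𝓝 a) := by
  refine Metric.tendsto_nhds.2 fun ε hε => ?_
  obtain ⟨G, b, hGb, hFG, hab⟩ := h (ε / 3) (by positivity)
  filter_upwards [Metric.tendsto_nhds.1 hGb (ε / 3) (by positivity)] with i hi
  calc dist (F i) a ≤ dist (F i) (G i) + dist (G i) b + dist b a := dist_triangle4 _ _ _ _
    _ < ε / 3 + ε / 3 + ε / 3 := by rw [dist_comm b a]; linarith [hFG i]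
    _ = ε := by ring

namespace MeasureTheory

open scoped symmDiff

variable {X : Type*} [MeasurableSpace X]

lemma exists_measurableSet_ae_eq_indicator_one {μ : Measure X} {f : X → ℝ}
    (hf : AEMeasurable f μ) (h01 : ∀ᵐ x ∂μ, f x = 0 ∨ f x = 1) :
    ∃ t, MeasurableSet t ∧ f =ᵐ[μ] t.indicator 1 := by
  refine ⟨hf.mk f ⁻¹' {1}, hf.measurable_mk (measurableSet_singleton 1), ?_⟩
  filter_upwards [h01, hf.ae_eq_mk] with x hx hmk
  rcases hx with h | h <;> simp [indicator, ← hmk, h]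

lemma Measure.AbsolutelyContinuous.exists_pos_forall_measure_lt {ν ρ : Measure X}
    [IsFiniteMeasure ν] [SigmaFinite ρ] (hνρ : ν ≪ ρ) {ε : ℝ≥0∞} (hε : ε ≠ 0) :
    ∃ δ > 0, ∀ s, ρ s < δ → ν s < ε := by
  have hfin : ∫⁻ x, ν.rnDeriv ρ x ∂ρ ≠ ∞ := by
    rw [← setLIntegral_univ, Measure.setLIntegral_rnDeriv hνρ]
    exact measure_ne_top ν univ
  obtain ⟨δ, hδ, hsmall⟩ := exists_pos_setLIntegral_lt_of_measure_lt hfin hε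
  exact ⟨δ, hδ, fun s hs => Measure.setLIntegral_rnDeriv hνρ s ▸ hsmall s hs⟩

namespace MeasuredSets

variable {μ : Measure X} [IsFiniteMeasure μ]

noncomputable def indicatorL1 (s : MeasuredSets μ) : Lp ℝ 1 μ :=
  indicatorConstLp 1 s.2 (measure_ne_top μ s) 1

lemma indicatorL1_ae_eq (s : MeasuredSets μ) : indicatorL1 s =ᵐ[μ] (s : Set X).indicator 1 :=
  indicatorConstLp_coeFn

lemma isometry_indicatorL1 : Isometry (indicatorL1 (μ := μ)) :=
  Isometry.of_dist_eq fun s t => by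
    rw [indicatorL1, indicatorL1, dist_indicatorConstLp_eq_norm,
      norm_indicatorConstLp one_ne_zero one_ne_top, dist_def]
    simp only [norm_one, one_mul, toReal_one, div_one, Real.rpow_one]; rfl

lemma isClosed_range_indicatorL1 : IsClosed (range (indicatorL1 (μ := μ))) := by
  refine isClosed_of_closure_subset fun f hf => ?_
  obtain ⟨s, hs, hlim⟩ := mem_closure_iff_seq_limit.1 hf
  choose t ht using hs
  obtain ⟨ns, -, hae⟩ := (tendstoInMeasure_of_tendsto_Lp hlim).exists_seq_tendsto_ae
  have h01 : ∀ᵐ x ∂μ, f x = 0 ∨ f x = 1 := by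
    have hind : ∀ᵐ x ∂μ, ∀ k, s k x = (t k : Set X).indicator 1 x := by
      rw [ae_all_iff]
      exact fun k => (ht k ▸ indicatorL1_ae_eq (t k))
    filter_upwards [hind, hae] with x hx hxlim
    have hmem : f x ∈ ({0, 1} : Set ℝ) :=
      ((finite_singleton 1).insert 0).isClosed.mem_of_tendsto hxlim
        (Eventually.of_forall fun k => by
          rw [hx]; by_cases h : x ∈ (t (ns k) : Set X) <;> simp [h])
    simpa using hmem
  obtain ⟨u, hu, hfu⟩ := exists_measurableSet_ae_eq_indicator_one
    (Lp.aestronglyMeasurable f).aemeasurable h01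
  exact ⟨⟨u, hu⟩, Lp.ext ((indicatorL1_ae_eq _).trans hfu.symm)⟩

instance : CompleteSpace (MeasuredSets μ) :=
  isometry_indicatorL1.isUniformInducing.completeSpace isClosed_range_indicatorL1.isComplete

lemma continuous_measureReal_of_absolutelyContinuous {ν ρ : Measure X}
    [IsFiniteMeasure ν] [SigmaFinite ρ] (hνρ : ν ≪ ρ) :
    Continuous fun s : MeasuredSets ρ => ν.real s := by
  -- the identity map, from the distance `ρ (s ∆ t)` to the distance `ν (s ∆ t)`
  have hid : UniformContinuous fun s : MeasuredSets ρ => (show MeasuredSets ν from s) :=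
    EMetric.uniformContinuous_iff.2 fun ε hε =>
      (hνρ.exists_pos_forall_measure_lt hε.ne').imp fun _ ⟨hδ, h⟩ => ⟨hδ, h _⟩
  exact lipschitzWith_measureReal.continuous.comp hid.continuous

end MeasuredSets

section VitaliHahnSaks

variable {ρ : Measure X} [IsFiniteMeasure ρ] {ν : ℕ → Measure X} [∀ n, IsFiniteMeasure (ν n)]

lemma exists_ball_forall_abs_measureReal_sub_le (hνρ : ∀ n, ν n ≪ ρ)
    (hν : ∀ A, MeasurableSet A → CauchySeq fun n => (ν n).real A) {ε : ℝ} (hε : 0 < ε) :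
    ∃ s₀, MeasurableSet s₀ ∧ ∃ r > 0, ∃ N, ∀ s, MeasurableSet s → ρ.real (s ∆ s₀) < r →
      ∀ m ≥ N, ∀ n ≥ N, |(ν m).real s - (ν n).real s| ≤ ε := by
  let E : ℕ → Set (MeasuredSets ρ) := fun N =>
    {s | ∀ m ≥ N, ∀ n ≥ N, |(ν m).real s - (ν n).real s| ≤ ε}
  have hE : ∀ N, IsClosed (E N) := fun N => by
    simp only [E, ofPred_forall]
    exact isClosed_iInter fun m => isClosed_iInter fun _ => isClosed_iInter fun n =>
      isClosed_iInter fun _ => isClosed_le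
        ((MeasuredSets.continuous_measureReal_of_absolutelyContinuous (hνρ m)).sub
          (MeasuredSets.continuous_measureReal_of_absolutelyContinuous (hνρ n))).abs
        continuous_const
  have hcover : ⋃ N, E N = univ := eq_univ_of_forall fun s => by
    obtain ⟨N, hN⟩ := Metric.cauchySeq_iff.1 (hν s s.2) ε hε
    exact mem_iUnion.2 ⟨N, fun m hm n hn => (hN m hm n hn).le⟩
  have : Nonempty (MeasuredSets ρ) := ⟨⟨∅, .empty⟩⟩
  obtain ⟨N, s₀, hs₀⟩ := nonempty_interior_of_iUnion_of_closed hE hcover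
  obtain ⟨r, hr, hball⟩ := Metric.mem_nhds_iff.1 (mem_interior_iff_mem_nhds.1 hs₀)
  exact ⟨s₀, s₀.2, r, hr, N, fun s hs hsr => hball (a := show MeasuredSets ρ from ⟨s, hs⟩) hsr⟩

lemma exists_pos_forall_abs_measureReal_sub_le (hνρ : ∀ n, ν n ≪ ρ)
    (hν : ∀ A, MeasurableSet A → CauchySeq fun n => (ν n).real A) {ε : ℝ} (hε : 0 < ε) :
    ∃ r > 0, ∃ N, ∀ m ≥ N, ∀ n ≥ N, ∀ B, MeasurableSet B → ρ.real B < r →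
      |(ν m).real B - (ν n).real B| ≤ 2 * ε := by
  obtain ⟨s₀, hs₀, r, hr, N, hball⟩ := exists_ball_forall_abs_measureReal_sub_le hνρ hν hε
  refine ⟨r, hr, N, fun m hm n hn B hB hBr => ?_⟩
  have hclose : ∀ s, s ∆ s₀ ⊆ B → ρ.real (s ∆ s₀) < r :=
    fun s hs => (measureReal_mono hs).trans_lt hBr
  -- `B` is the difference of `s₀ ∪ B` and `s₀ \ B`, both of which lie within `ρ B` of `s₀`
  have h₁ := hball _ (hs₀.union hB) (hclose _ fun x => by simp [mem_symmDiff]; tauto) m hm n hn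
  have h₂ := hball _ (hs₀.diff hB) (hclose _ fun x => by simp [mem_symmDiff]; tauto) m hm n hn
  have hsplit : ∀ k, (ν k).real (s₀ ∪ B) = (ν k).real (s₀ \ B) + (ν k).real B := fun k => by
    rw [← measureReal_union disjoint_sdiff_left hB, sdiff_union_self]
  rw [hsplit, hsplit] at h₁
  rw [abs_le] at h₁ h₂ ⊢
  constructor <;> linarith [h₁.1, h₁.2, h₂.1, h₂.2]

theorem exists_pos_eventually_forall_measure_le (hνρ : ∀ n, ν n ≪ ρ)
    (hν : ∀ A, MeasurableSet A → CauchySeq fun n => (ν n).real A) {ε : ℝ≥0∞} (hε : ε ≠ 0) :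
    ∃ δ > 0, ∀ᶠ n in atTop, ∀ A, MeasurableSet A → ρ A < δ → ν n A ≤ ε := by
  rcases eq_or_ne ε ∞ with rfl | hε_top
  · exact ⟨1, one_pos, Eventually.of_forall fun _ _ _ _ => le_top⟩
  have hε' : 0 < ε.toReal := toReal_pos hε hε_top
  obtain ⟨r, hr, N, hN⟩ := exists_pos_forall_abs_measureReal_sub_le hνρ hν (ε := ε.toReal / 4)
    (by positivity)
  obtain ⟨δ, hδ, hνN⟩ := (hνρ N).exists_pos_forall_measure_lt
    (ε := ENNReal.ofReal (ε.toReal / 2)) (by simp [hε'])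
  refine ⟨min δ (ENNReal.ofReal r), lt_min hδ (ofReal_pos.2 hr),
    eventually_atTop.2 ⟨N, fun n hn A hA hAδ => ?_⟩⟩
  have hνNA : (ν N).real A ≤ ε.toReal / 2 :=
    toReal_le_of_le_ofReal (by positivity) (hνN A (hAδ.trans_le (min_le_left _ _))).le
  have hνnA := hN n hn N le_rfl A hA (toReal_lt_of_lt_ofReal (hAδ.trans_le (min_le_right _ _)))
  calc ν n A = ENNReal.ofReal ((ν n).real A) := (ofReal_measureReal (measure_ne_top _ _)).symm
    _ ≤ ENNReal.ofReal ε.toReal :=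
        ofReal_le_ofReal (by linarith [le_abs_self ((ν n).real A - (ν N).real A)])
    _ = ε := ofReal_toReal hε_top

end VitaliHahnSaks

section SetwiseLimit

variable {ρ : Measure X} [IsFiniteMeasure ρ] {ν : ℕ → Measure X}

theorem exists_measure_eq_of_tendsto_measure {L : Set X → ℝ≥0∞}
    (hL : ∀ A, MeasurableSet A → Tendsto (fun n => ν n A) atTop (𝓝 (L A)))
    (hunif : ∀ ε ≠ 0, ∃ δ > 0, ∀ᶠ n in atTop, ∀ A, MeasurableSet A → ρ A < δ → ν n A ≤ ε) :
    ∃ μ : Measure X, μ ≪ ρ ∧ ∀ A, MeasurableSet A → μ A = L A := by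
  have hsmall : ∀ ε ≠ 0, ∃ δ > 0, ∀ A, MeasurableSet A → ρ A < δ → L A ≤ ε := fun ε hε => by
    obtain ⟨δ, hδ, hev⟩ := hunif ε hε
    exact ⟨δ, hδ, fun A hA hAδ => le_of_tendsto (hL A hA) (hev.mono fun n hn => hn A hA hAδ)⟩
  have hnull : ∀ A, MeasurableSet A → ρ A = 0 → L A = 0 := fun A hA hρA =>
    nonpos_iff_eq_zero.1 <| le_of_forall_gt_imp_ge_of_dense fun ε hε => by
      obtain ⟨δ, hδ, h⟩ := hsmall ε hε.ne'
      exact h A hA (hρA ▸ hδ)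
  have hadd : ∀ A B, MeasurableSet A → MeasurableSet B → Disjoint A B →
      L (A ∪ B) = L A + L B := fun A B hA hB hAB =>
    tendsto_nhds_unique (hL _ (hA.union hB))
      (by simpa only [measure_union hAB hB] using (hL A hA).add (hL B hB))
  refine ⟨Measure.ofMeasurable (fun A _ => L A) (hnull ∅ .empty measure_empty) fun f hf hdisj => ?_,
    Measure.AbsolutelyContinuous.mk fun A hA hρA => by
      rw [Measure.ofMeasurable_apply A hA, hnull A hA hρA],
    fun A hA => Measure.ofMeasurable_apply A hA⟩
  set T : ℕ → Set X := fun k => ⋃ i ≥ k, f i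
  have hT : ∀ k, MeasurableSet (T k) := fun k => .biUnion (to_countable _) fun i _ => hf i
  have hsplit : ∀ k, ∑ i ∈ Finset.range k, L (f i) + L (T k) = L (⋃ i, f i) := by
    intro k
    induction k with
    | zero => simp [T]
    | succ k ih =>
      have hTk : T k = f k ∪ T (k + 1) := by
        ext x
        simp only [T, mem_iUnion, mem_union, exists_prop]
        constructor
        · rintro ⟨i, hi, hx⟩
          rcases hi.eq_or_lt with rfl | hi
          exacts [Or.inl hx, Or.inr ⟨i, hi, hx⟩]
        · rintro (hx | ⟨i, hi, hx⟩)
          exacts [⟨k, le_rfl, hx⟩, ⟨i, by omega, hx⟩]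
      rw [Finset.sum_range_succ, add_assoc, ← hadd _ _ (hf k) (hT (k + 1)), ← hTk, ih]
      exact disjoint_iUnion₂_right.2 fun i hi => hdisj (by omega)
  have htail : Tendsto (fun k => L (T k)) atTop (𝓝 0) := by
    have hρT := tendsto_measure_biUnion_Ici_zero_of_pairwise_disjoint (μ := ρ)
      (fun i => (hf i).nullMeasurableSet) hdisj
    refine ENNReal.tendsto_nhds_zero.2 fun ε hε => ?_
    obtain ⟨δ, hδ, h⟩ := hsmall ε hε.ne'
    exact ((tendsto_order.1 hρT).2 δ hδ).mono fun k hk => h _ (hT k) hk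
  have hsum := (ENNReal.tendsto_nat_tsum fun i => L (f i)).add htail
  rw [add_zero] at hsum
  exact tendsto_nhds_unique tendsto_const_nhds (hsum.congr hsplit)

theorem exists_measure_tendsto_apply [∀ n, IsFiniteMeasure (ν n)] (hνρ : ∀ n, ν n ≪ ρ)
    (hν : ∀ A, MeasurableSet A → ∃ c ≠ ∞, Tendsto (fun n => ν n A) atTop (𝓝 c)) :
    ∃ μ : Measure X, IsFiniteMeasure μ ∧ μ ≪ ρ ∧
      ∀ A, MeasurableSet A → Tendsto (fun n => ν n A) atTop (𝓝 (μ A)) := by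
  choose! L hL_top hL using hν
  have hcauchy : ∀ A, MeasurableSet A → CauchySeq fun n => (ν n).real A := fun A hA =>
    ((ENNReal.tendsto_toReal (hL_top A hA)).comp (hL A hA)).cauchySeq
  obtain ⟨μ, hμρ, hμ⟩ := exists_measure_eq_of_tendsto_measure hL
    fun ε hε => exists_pos_eventually_forall_measure_le hνρ hcauchy hε
  exact ⟨μ, ⟨hμ univ .univ ▸ (hL_top _ .univ).lt_top⟩, hμρ, fun A hA => hμ A hA ▸ hL A hA⟩

end SetwiseLimit

lemma SimpleFunc.exists_forall_abs_sub_le {g : X → ℝ} (hg : Measurable g)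
    (hbdd : ∃ C, ∀ x, |g x| ≤ C) {ε : ℝ} (hε : 0 < ε) :
    ∃ φ : SimpleFunc X ℝ, ∀ x, |g x - φ x| ≤ ε := by
  obtain ⟨C, hC⟩ := hbdd
  let φ : X → ℝ := fun x => ⌊g x / ε⌋ * ε
  have hφ : Measurable φ := (measurable_from_top.comp (hg.div_const ε).floor).mul_const ε
  have hrange : (range φ).Finite := by
    refine ((finite_Icc ⌊-C / ε⌋ ⌊C / ε⌋).image fun z : ℤ => (z : ℝ) * ε).subset ?_
    rintro _ ⟨x, rfl⟩
    have := abs_le.1 (hC x)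
    exact ⟨⌊g x / ε⌋, ⟨Int.floor_mono (by gcongr; exact this.1),
      Int.floor_mono (by gcongr; exact this.2)⟩, rfl⟩
  refine ⟨⟨φ, fun c => hφ (measurableSet_singleton c), hrange⟩, fun x => ?_⟩
  have hfract : g x - φ x = ε * Int.fract (g x / ε) := by
    rw [Int.fract, mul_sub, mul_div_cancel₀ _ hε.ne']; ring
  rw [SimpleFunc.coe_mk, hfract, abs_of_nonneg (mul_nonneg hε.le (Int.fract_nonneg _))]
  exact mul_le_of_le_one_right hε.le (Int.fract_lt_one _).le

variable {ρ : Measure X} {u : ℕ → X → ℝ} {h : X → ℝ}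

lemma tendsto_integral_simpleFunc_mul (hu : ∀ n, Integrable (u n) ρ) (hh : Integrable h ρ)
    (hset : ∀ A, MeasurableSet A →
      Tendsto (fun n => ∫ x in A, u n x ∂ρ) atTop (𝓝 (∫ x in A, h x ∂ρ)))
    (φ : SimpleFunc X ℝ) :
    Tendsto (fun n => ∫ x, φ x * u n x ∂ρ) atTop (𝓝 (∫ x, φ x * h x ∂ρ)) := by
  induction φ using SimpleFunc.induction with
  | const c hs =>
    simp only [SimpleFunc.coe_piecewise, SimpleFunc.coe_const, SimpleFunc.const_zero,
      SimpleFunc.coe_zero, piecewise_eq_indicator, ← indicator_mul_left, Function.const_apply,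
      integral_indicator hs, integral_const_mul]
    exact (hset _ hs).const_mul c
  | @add φ ψ _ hφ hψ =>
    simp only [SimpleFunc.coe_add, Pi.add_apply, add_mul]
    have hsplit : ∀ w : X → ℝ, Integrable w ρ →
        ∫ x, φ x * w x + ψ x * w x ∂ρ = ∫ x, φ x * w x ∂ρ + ∫ x, ψ x * w x ∂ρ :=
      fun w hw => integral_add (hw.simpleFunc_mul φ) (hw.simpleFunc_mul ψ)
    simpa only [hsplit _ (hu _), hsplit h hh] using hφ.add hψ

lemma withDensity_ofReal_apply_eq_ofReal_setIntegral
    {w : X → ℝ} (hw : Integrable w ρ) (hw0 : 0 ≤ᵐ[ρ] w)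
    {A : Set X} (hA : MeasurableSet A) :
    ρ.withDensity (fun x => ENNReal.ofReal (w x)) A = ENNReal.ofReal (∫ x in A, w x ∂ρ) := by
  rw [withDensity_apply _ hA, ofReal_integral_eq_lintegral_ofReal hw.integrableOn
    (ae_restrict_of_ae hw0)]

lemma measureReal_withDensity_ofReal {w : X → ℝ} (hw : Integrable w ρ) (hw0 : 0 ≤ᵐ[ρ] w)
    {A : Set X} (hA : MeasurableSet A) :
    (ρ.withDensity fun x => ENNReal.ofReal (w x)).real A = ∫ x in A, w x ∂ρ := by
  rw [Measure.real, withDensity_ofReal_apply_eq_ofReal_setIntegral hw hw0 hA,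
    toReal_ofReal (setIntegral_nonneg_of_ae_restrict (ae_restrict_of_ae hw0))]

theorem weakL1Tendsto_of_tendsto_setIntegral (hu : ∀ n, Integrable (u n) ρ) (hh : Integrable h ρ)
    (hbdd : BddAbove (range fun n => ∫ x, |u n x| ∂ρ))
    (hset : ∀ A, MeasurableSet A →
      Tendsto (fun n => ∫ x in A, u n x ∂ρ) atTop (𝓝 (∫ x in A, h x ∂ρ))) :
    WeakL1Tendsto ρ u h := by
  rintro g hg ⟨C, hC⟩
  obtain ⟨M, hM⟩ := hbdd
  set K := max M (∫ x, |h x| ∂ρ) + 1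
  have hK : 0 < K := by positivity
  refine tendsto_of_forall_dist_le fun ε hε => ?_
  obtain ⟨φ, hφ⟩ := SimpleFunc.exists_forall_abs_sub_le hg ⟨C, hC⟩ (div_pos hε hK)
  have hdist : ∀ w : X → ℝ, Integrable w ρ → ∫ x, |w x| ∂ρ ≤ K →
      dist (∫ x, w x * g x ∂ρ) (∫ x, φ x * w x ∂ρ) ≤ ε := fun w hw hwK => by
    rw [Real.dist_eq, ← integral_sub (g := fun x => φ x * w x)
      (hw.mul_bdd hg.aestronglyMeasurable (ae_of_all _ hC)) (hw.simpleFunc_mul φ)]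
    calc |∫ x, w x * g x - φ x * w x ∂ρ| ≤ ∫ x, ε / K * |w x| ∂ρ := by
          rw [← Real.norm_eq_abs]
          refine norm_integral_le_of_norm_le (hw.abs.const_mul _) (ae_of_all _ fun x => ?_)
          rw [Real.norm_eq_abs, show w x * g x - φ x * w x = (g x - φ x) * w x by ring, abs_mul]
          gcongr
          exact hφ x
      _ = ε / K * ∫ x, |w x| ∂ρ := integral_const_mul _ _
      _ ≤ ε / K * K := by gcongr
      _ = ε := div_mul_cancel₀ ε hK.ne'
  exact ⟨_, _, tendsto_integral_simpleFunc_mul hu hh hset φ,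
    fun n => hdist _ (hu n)
      ((hM (mem_range_self n)).trans (by linarith [le_max_left M (∫ x, |h x| ∂ρ)])),
    hdist h hh (by linarith [le_max_right M (∫ x, |h x| ∂ρ)])⟩

lemma WeakL1Tendsto.tendsto_setIntegral (hw : WeakL1Tendsto ρ u h) {A : Set X}
    (hA : MeasurableSet A) :
    Tendsto (fun n => ∫ x in A, u n x ∂ρ) atTop (𝓝 (∫ x in A, h x ∂ρ)) := by
  have hind : ∀ x, |A.indicator (1 : X → ℝ) x| ≤ 1 := fun x => by
    by_cases hx : x ∈ A <;> simp [hx]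
  simpa only [← indicator_mul_right, Pi.one_apply, mul_one, integral_indicator hA]
    using hw _ (measurable_one.indicator hA) ⟨1, hind⟩

lemma WeakL1Tendsto.tendsto_withDensity (hw : WeakL1Tendsto ρ u h)
    (hu : ∀ n, Integrable (u n) ρ) (hupos : ∀ n x, 0 ≤ u n x) (hh : Integrable h ρ)
    {A : Set X} (hA : MeasurableSet A) :
    Tendsto (fun n => ρ.withDensity (fun x => ENNReal.ofReal (u n x)) A) atTop
      (𝓝 (ρ.withDensity (fun x => ENNReal.ofReal (h x)) A)) := by
  have hh0 : 0 ≤ᵐ[ρ] h := ae_nonneg_of_forall_setIntegral_nonneg hh fun s hs _ =>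
    ge_of_tendsto (hw.tendsto_setIntegral hs)
      (Eventually.of_forall fun n => setIntegral_nonneg hs fun x _ => hupos n x)
  rw [withDensity_ofReal_apply_eq_ofReal_setIntegral hh hh0 hA]
  exact ((ENNReal.continuous_ofReal.tendsto _).comp (hw.tendsto_setIntegral hA)).congr fun n =>
    (withDensity_ofReal_apply_eq_ofReal_setIntegral (hu n) (ae_of_all _ (hupos n)) hA).symm

theorem exists_weakL1Tendsto_of_tendsto_withDensity [IsFiniteMeasure ρ]
    (hu : ∀ n, Integrable (u n) ρ) (hupos : ∀ n x, 0 ≤ u n x)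
    (hconv : ∀ A, MeasurableSet A → ∃ c : ℝ≥0∞, c < ⊤ ∧
      Tendsto (fun n => ρ.withDensity (fun x => ENNReal.ofReal (u n x)) A) atTop (𝓝 c)) :
    ∃ h, Integrable h ρ ∧ WeakL1Tendsto ρ u h := by
  have := fun n => isFiniteMeasure_withDensity_ofReal (hu n).2
  obtain ⟨μ, hμ, hμρ, hlim⟩ := exists_measure_tendsto_apply
    (fun n => withDensity_absolutelyContinuous _ _)
    fun A hA => (hconv A hA).imp fun c hc => ⟨hc.1.ne, hc.2⟩
  have hset : ∀ A, MeasurableSet A → Tendsto (fun n => ∫ x in A, u n x ∂ρ) atTop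
      (𝓝 (∫ x in A, (μ.rnDeriv ρ x).toReal ∂ρ)) := fun A hA => by
    rw [Measure.setIntegral_toReal_rnDeriv hμρ]
    exact ((ENNReal.tendsto_toReal (measure_ne_top μ A)).comp (hlim A hA)).congr fun n =>
      measureReal_withDensity_ofReal (hu n) (ae_of_all _ (hupos n)) hA
  have hbdd : BddAbove (range fun n => ∫ x, |u n x| ∂ρ) := by
    simpa only [abs_of_nonneg (hupos _ _), setIntegral_univ]
      using (hset univ .univ).bddAbove_range
  exact ⟨_, Measure.integrable_toReal_rnDeriv,
    weakL1Tendsto_of_tendsto_setIntegral hu Measure.integrable_toReal_rnDeriv hbdd hset⟩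

end MeasureTheory

theorem weakL1_iff_setwise_convergence_withDensity_general
    {X : Type*} [MeasurableSpace X]
    (ρ : Measure X) [IsFiniteMeasure ρ]
    (u : ℕ → X → ℝ) (hu : ∀ n, Integrable (u n) ρ) (hupos : ∀ n x, 0 ≤ u n x) :
    ((∃ h : X → ℝ, Integrable h ρ ∧ WeakL1Tendsto ρ u h)
      ↔ ∀ A : Set X, MeasurableSet A → ∃ c : ℝ≥0∞, c < ⊤ ∧
          Tendsto (fun n => ρ.withDensity (fun x => ENNReal.ofReal (u n x)) A)
            atTop (nhds c))
    ∧ ∀ h : X → ℝ, Integrable h ρ → WeakL1Tendsto ρ u h →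
        ∀ A : Set X, MeasurableSet A →
          Tendsto (fun n => ρ.withDensity (fun x => ENNReal.ofReal (u n x)) A)
            atTop (nhds (ρ.withDensity (fun x => ENNReal.ofReal (h x)) A)) := by
  refine ⟨⟨fun ⟨h, hh, hw⟩ A hA => ⟨_, ?_, hw.tendsto_withDensity hu hupos hh hA⟩,
    exists_weakL1Tendsto_of_tendsto_withDensity hu hupos⟩,
    fun h hh hw A hA => hw.tendsto_withDensity hu hupos hh hA⟩
  have := isFiniteMeasure_withDensity_ofReal hh.2
  exact measure_lt_top _ A

/-- For a sequence of nonnegative `uₙ ∈ L¹(X, ρ)` on a compact metric space with finite Borel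
measure `ρ`, and the measures `ρₙ = ρ.withDensity uₙ`: `(uₙ)` converges weakly in `L¹(X, ρ)`
to some `h ∈ L¹(X, ρ)` if and only if for every Borel set `A` the sequence `ρₙ(A)` converges
to a finite limit; moreover, in that case the limit set function is exactly the measure
`ρ.withDensity h`. -/
theorem weakL1_iff_setwise_convergence_withDensity
    {X : Type*} [MetricSpace X] [CompactSpace X] [MeasurableSpace X] [BorelSpace X]
    (ρ : Measure X) [IsFiniteMeasure ρ]
    (u : ℕ → X → ℝ) (hu : ∀ n, Integrable (u n) ρ) (hupos : ∀ n x, 0 ≤ u n x) :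
    ((∃ h : X → ℝ, Integrable h ρ ∧ WeakL1Tendsto ρ u h)
      ↔ ∀ A : Set X, MeasurableSet A → ∃ c : ℝ≥0∞, c < ⊤ ∧
          Tendsto (fun n => ρ.withDensity (fun x => ENNReal.ofReal (u n x)) A)
            atTop (nhds c))
    ∧ ∀ h : X → ℝ, Integrable h ρ → WeakL1Tendsto ρ u h →
        ∀ A : Set X, MeasurableSet A →
          Tendsto (fun n => ρ.withDensity (fun x => ENNReal.ofReal (u n x)) A)
            atTop (nhds (ρ.withDensity (fun x => ENNReal.ofReal (h x)) A)) :=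
  weakL1_iff_setwise_convergence_withDensity_general ρ u hu hupos
end
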